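/- Let $\overline{X}, \overline{S} \in \mathbb{S}^n_+$ with $\langle \overline{X}, \overline{S}\rangle = 0$, simultaneously diagonalized by an orthogonal $\overline{P} = [\overline{P}_\alpha\ \overline{P}_\beta\ \overline{P}_\gamma]$ with $\overline{X} = \overline{P}_\alpha\Lambda_\alpha\overline{P}_\alpha^T$, $\Lambda_\alpha \succ 0$, and $\overline{S} = \overline{P}_\gamma\Lambda_\gamma\overline{P}_\gamma^T$, $\Lambda_\gamma \succ 0$. Then for any $S \in \mathbb{S}^n_+$, with $\widetilde{S} = \overline{P}^T S \overline{P}$ partitioned in blocks according to $(\alpha,\beta,\gamma)$, the projection of $-S$ onto $\mathcal{N}_{\mathbb{S}^n_+}(\overline{X})$ satisfies $\mathrm{dist}^2(-S, \mathcal{N}_{\mathbb{S}^n_+}(\overline{X})) = \|\widetilde{S}_{\alpha\alpha}\|^2 + 2\|\widetilde{S}_{\alpha\beta}\|^2 + 2\|\widetilde{S}_{\alpha\gamma}\|^2$. -/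

import Mathlib

open Matrix

attribute [local instance] Matrix.frobeniusNormedAddCommGroup

/-- The normal cone (in the ambient space `𝕊ⁿ` of symmetric matrices) of a set `D` of
symmetric matrices at a point `x`. -/
def matNormalCone {n : ℕ} (D : Set (Matrix (Fin n) (Fin n) ℝ))
    (x : Matrix (Fin n) (Fin n) ℝ) : Set (Matrix (Fin n) (Fin n) ℝ) :=
  {H | H.IsSymm ∧ ∀ z ∈ D, Matrix.trace (Hᵀ * (z - x)) ≤ 0}

/-!
Conjugation `A ↦ Pᵀ A P` by the orthogonal `P` is a Frobenius isometry carrying the normal cone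
of `𝕊ⁿ₊` at `X̄` onto the normal cone at the diagonal `D = diag(Λ_α, 0, 0)`, and `-S` to `-T`
with `T = Pᵀ S P`. A matrix `K` lies in the latter cone iff `-K ⪰ 0` and `⟨K, D⟩ = 0`; as
`Λ_α ≻ 0` this forces `K_ii = 0` for `i ∈ α`, so the rows and columns of `K` indexed by `α`
vanish. Hence `‖-T - K‖²` is at least the sum of `T_ij²` over the entries with `i ∈ α` or
`j ∈ α`, and the bound is attained by `K = -E T E`, where `E` is the coordinate projection
onto `β ∪ γ`.
-/

namespace Matrix

variable {m n : Type*} [Fintype m] [Fintype n]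

theorem frobenius_norm_sq_eq_sum (A : Matrix m n ℝ) : ‖A‖ ^ 2 = ∑ i, ∑ j, A i j ^ 2 := by
  rw [frobenius_norm_def, ← Real.rpow_natCast, ← Real.rpow_mul (by positivity)]
  norm_num

theorem sum_sq_eq_trace_transpose_mul (A : Matrix m n ℝ) :
    ∑ i, ∑ j, A i j ^ 2 = (Aᵀ * A).trace := by
  simp only [trace, diag, mul_apply, transpose_apply, sq]
  exact Finset.sum_comm

theorem frobenius_norm_transpose_mul_mul [DecidableEq m] {P : Matrix m m ℝ} (hP : P * Pᵀ = 1)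
    (A : Matrix m m ℝ) : ‖Pᵀ * A * P‖ = ‖A‖ := by
  suffices ‖Pᵀ * A * P‖ ^ 2 = ‖A‖ ^ 2 from
    (pow_left_inj₀ (norm_nonneg _) (norm_nonneg _) two_ne_zero).1 this
  simp only [frobenius_norm_sq_eq_sum, sum_sq_eq_trace_transpose_mul, transpose_mul,
    transpose_transpose, Matrix.mul_assoc]
  rw [← Matrix.mul_assoc P, hP, Matrix.one_mul, trace_mul_comm, Matrix.mul_assoc,
    Matrix.mul_assoc, hP, Matrix.mul_one]

theorem isometry_transpose_mul_mul [DecidableEq m] {P : Matrix m m ℝ} (hP : P * Pᵀ = 1) :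
    Isometry fun A : Matrix m m ℝ => Pᵀ * A * P :=
  Isometry.of_dist_eq fun A B => by
    simp only [dist_eq_norm, ← Matrix.mul_sub, ← Matrix.sub_mul,
      frobenius_norm_transpose_mul_mul hP]

open scoped MatrixOrder in
theorem PosSemidef.trace_mul_nonneg {A B : Matrix m m ℝ} (hA : A.PosSemidef)
    (hB : B.PosSemidef) : 0 ≤ (A * B).trace := by
  classical
  obtain ⟨C, rfl⟩ := CStarAlgebra.nonneg_iff_eq_star_mul_self.mp hA.nonneg
  rw [Matrix.mul_assoc, trace_mul_comm, star_eq_conjTranspose]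
  exact (hB.mul_mul_conjTranspose_same C).trace_nonneg

theorem PosSemidef.apply_eq_zero_of_diag_eq_zero [DecidableEq m] {A : Matrix m m ℝ}
    (hA : A.PosSemidef) {i : m} (hi : A i i = 0) (j : m) : A j i = 0 := by
  have hcol := (hA.dotProduct_mulVec_zero_iff (Pi.single i 1)).1
    (by simpa [mulVec_single_one] using hi)
  simpa [mulVec_single_one] using congrFun hcol j

theorem PosSemidef.apply_eq_zero_of_trace_mul_diagonal_eq_zero [DecidableEq m]
    {A : Matrix m m ℝ} {d : m → ℝ} (hA : A.PosSemidef) (hd : ∀ i, 0 ≤ d i)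
    (htr : (A * diagonal d).trace = 0) {i : m} (hi : 0 < d i) (j : m) : A j i = 0 := by
  have hsum : ∑ k, A k k * d k = 0 := by simpa [trace, mul_diagonal] using htr
  have hterm := (Finset.sum_eq_zero_iff_of_nonneg fun k _ =>
    mul_nonneg (hA.diag_nonneg (i := k)) (hd k)).1 hsum i (Finset.mem_univ i)
  exact hA.apply_eq_zero_of_diag_eq_zero ((mul_eq_zero.1 hterm).resolve_right hi.ne') j

end Matrix

theorem Metric.infDist_eq_dist_of_forall_dist_le {α : Type*} [PseudoMetricSpace α] {x y : α}
    {s : Set α} (hy : y ∈ s) (h : ∀ z ∈ s, dist x y ≤ dist x z) :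
    Metric.infDist x s = dist x y :=
  le_antisymm (Metric.infDist_le_dist_of_mem hy) ((Metric.le_infDist ⟨y, hy⟩).2 h)

theorem Finset.sum_sum_ite_mem_or_mem {ι R : Type*} [Fintype ι] [DecidableEq ι]
    [NonAssocSemiring R] (s : Finset ι) (f : ι → ι → R) (hf : ∀ i j, f i j = f j i) :
    ∑ i, ∑ j, (if i ∈ s ∨ j ∈ s then f i j else 0) =
      ∑ i ∈ s, ∑ j ∈ s, f i j + 2 * ∑ i ∈ s, ∑ j ∈ sᶜ, f i j := by
  have hin : ∀ i ∈ s, ∑ j, (if i ∈ s ∨ j ∈ s then f i j else 0) =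
      ∑ j ∈ s, f i j + ∑ j ∈ sᶜ, f i j := fun i hi => by
    simp [hi, Finset.sum_add_sum_compl]
  have hout : ∀ i ∈ sᶜ, ∑ j, (if i ∈ s ∨ j ∈ s then f i j else 0) = ∑ j ∈ s, f i j :=
    fun i hi => by simp [Finset.mem_compl.1 hi, Finset.sum_ite_mem]
  have hswap : ∑ j ∈ s, ∑ i ∈ sᶜ, f i j = ∑ i ∈ s, ∑ j ∈ sᶜ, f i j :=
    Finset.sum_congr rfl fun i _ => Finset.sum_congr rfl fun j _ => hf j i
  rw [← Finset.sum_add_sum_compl s, Finset.sum_congr rfl hin, Finset.sum_congr rfl hout,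
    Finset.sum_add_distrib, Finset.sum_comm (s := sᶜ), hswap, two_mul, add_assoc]

section NormalCone

variable {n : ℕ}

theorem mem_matNormalCone_posSemidef_iff {X H : Matrix (Fin n) (Fin n) ℝ} (hX : X.PosSemidef) :
    H ∈ matNormalCone {Y | Y.PosSemidef} X ↔ (-H).PosSemidef ∧ (H * X).trace = 0 := by
  constructor
  · rintro ⟨hH, hle⟩
    rw [hH.eq] at hle
    -- test the defining inequality against `0`, `2X` and `X + vvᵀ`
    have htrace : (H * X).trace = 0 := by
      have h0 := hle 0 .zero
      have h2 := hle (X + X) (hX.add hX)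
      rw [zero_sub, Matrix.mul_neg, trace_neg, neg_nonpos] at h0
      rw [add_sub_cancel_right] at h2
      exact le_antisymm h2 h0
    refine ⟨posSemidef_iff_dotProduct_mulVec.2 ⟨by simpa using hH, fun v => ?_⟩, htrace⟩
    have hv := hle _ (hX.add (posSemidef_vecMulVec_self_star v))
    rw [add_sub_cancel_left, mul_vecMulVec, trace_vecMulVec] at hv
    simpa [neg_mulVec, dotProduct_comm] using hv
  · rintro ⟨hH, htrace⟩
    have hsymm : H.IsSymm := by simpa using hH.isHermitian
    refine ⟨hsymm, fun Z hZ => ?_⟩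
    rw [hsymm.eq, Matrix.mul_sub, trace_sub, htrace]
    simpa [Matrix.neg_mul] using hH.trace_mul_nonneg hZ

theorem image_transpose_mul_mul_matNormalCone {P X : Matrix (Fin n) (Fin n) ℝ}
    (hP1 : Pᵀ * P = 1) (hP2 : P * Pᵀ = 1) (hX : X.PosSemidef) :
    (fun A => Pᵀ * A * P) '' matNormalCone {Y | Y.PosSemidef} X =
      matNormalCone {Y | Y.PosSemidef} (Pᵀ * X * P) := by
  have hU : IsUnit P := ⟨⟨P, Pᵀ, hP2, hP1⟩, rfl⟩
  have hstar : star P = Pᵀ := by simp [star_eq_conjTranspose]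
  have hPXP : (Pᵀ * X * P).PosSemidef := by simpa using hX.conjTranspose_mul_mul_same P
  rw [Set.image_eq_preimage_of_inverse (g := fun K => P * K * Pᵀ)]
  · ext K
    simp only [Set.mem_preimage, mem_matNormalCone_posSemidef_iff hX,
      mem_matNormalCone_posSemidef_iff hPXP]
    rw [← Matrix.neg_mul, ← Matrix.mul_neg, ← hstar, hU.posSemidef_star_right_conjugate_iff]
    simp only [Matrix.mul_assoc]
    rw [trace_mul_comm, Matrix.mul_assoc, Matrix.mul_assoc]
  · intro A
    dsimp only
    rw [← Matrix.mul_assoc, ← Matrix.mul_assoc, hP2, Matrix.one_mul, Matrix.mul_assoc, hP2,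
      Matrix.mul_one]
  · intro A
    dsimp only
    rw [← Matrix.mul_assoc, ← Matrix.mul_assoc, hP1, Matrix.one_mul, Matrix.mul_assoc, hP1,
      Matrix.mul_one]

variable {d : Fin n → ℝ}

theorem apply_eq_zero_of_mem_matNormalCone_diagonal {K : Matrix (Fin n) (Fin n) ℝ}
    (hd : ∀ i, 0 ≤ d i) (hK : K ∈ matNormalCone {Y | Y.PosSemidef} (diagonal d))
    {i j : Fin n} (hij : 0 < d i ∨ 0 < d j) : K i j = 0 := by
  obtain ⟨hneg, htr⟩ :=
    (mem_matNormalCone_posSemidef_iff (PosSemidef.diagonal fun i => hd i)).1 hK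
  have htr' : (-K * diagonal d).trace = 0 := by rw [Matrix.neg_mul, trace_neg, htr, neg_zero]
  rcases hij with hi | hj
  · rw [← hK.1.apply i j]
    simpa using hneg.apply_eq_zero_of_trace_mul_diagonal_eq_zero hd htr' hi j
  · simpa using hneg.apply_eq_zero_of_trace_mul_diagonal_eq_zero hd htr' hj i

theorem sq_infDist_neg_matNormalCone_diagonal {T : Matrix (Fin n) (Fin n) ℝ}
    (hT : T.PosSemidef) {α : Finset (Fin n)} (hα : ∀ i ∈ α, 0 < d i) (hαc : ∀ i ∉ α, d i = 0) :
    Metric.infDist (-T) (matNormalCone {Y | Y.PosSemidef} (diagonal d)) ^ 2 =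
      ∑ i, ∑ j, if i ∈ α ∨ j ∈ α then T i j ^ 2 else 0 := by
  have hd : ∀ i, 0 ≤ d i := fun i =>
    if hi : i ∈ α then (hα i hi).le else (hαc i hi).ge
  set E : Matrix (Fin n) (Fin n) ℝ := diagonal fun i => if i ∈ α then 0 else 1
  have hED : E * diagonal d = 0 := by
    rw [diagonal_mul_diagonal, ← diagonal_zero]
    congr 1
    funext i
    by_cases hi : i ∈ α <;> simp [hi, hαc]
  have hE : (E * T * E).PosSemidef := by
    simpa [E, diagonal_transpose] using hT.conjTranspose_mul_mul_same E
  have hmem : -(E * T * E) ∈ matNormalCone {Y | Y.PosSemidef} (diagonal d) := by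
    refine (mem_matNormalCone_posSemidef_iff (PosSemidef.diagonal hd)).2 ⟨by simpa using hE, ?_⟩
    rw [Matrix.neg_mul, trace_neg, Matrix.mul_assoc, hED, Matrix.mul_zero, trace_zero, neg_zero]
  have hnorm_sq : ‖-T - -(E * T * E)‖ ^ 2 =
      ∑ i, ∑ j, if i ∈ α ∨ j ∈ α then T i j ^ 2 else 0 := by
    rw [frobenius_norm_sq_eq_sum]
    refine Finset.sum_congr rfl fun i _ => Finset.sum_congr rfl fun j _ => ?_
    by_cases hi : i ∈ α <;> by_cases hj : j ∈ α <;> simp [E, diagonal_mul, mul_diagonal, hi, hj]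
  have hle : ∀ K ∈ matNormalCone {Y | Y.PosSemidef} (diagonal d),
      ‖-T - -(E * T * E)‖ ^ 2 ≤ ‖-T - K‖ ^ 2 := fun K hK => by
    rw [hnorm_sq, frobenius_norm_sq_eq_sum]
    refine Finset.sum_le_sum fun i _ => Finset.sum_le_sum fun j _ => ?_
    split_ifs with hij
    · have hKij : K i j = 0 :=
        apply_eq_zero_of_mem_matNormalCone_diagonal hd hK (hij.imp (hα i) (hα j))
      simp [hKij]
    · exact sq_nonneg _
  rw [Metric.infDist_eq_dist_of_forall_dist_le hmem fun K hK => ?_, dist_eq_norm, hnorm_sq]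
  rw [dist_eq_norm, dist_eq_norm]
  exact (pow_le_pow_iff_left₀ (norm_nonneg _) (norm_nonneg _) two_ne_zero).1 (hle K hK)

end NormalCone

theorem stmt7_general {n : ℕ} (α β γ : Finset (Fin n))
    (hαβ : Disjoint α β) (hαγ : Disjoint α γ) (hβγ : Disjoint β γ)
    (hcover : α ∪ β ∪ γ = Finset.univ)
    (P : Matrix (Fin n) (Fin n) ℝ) (hP1 : Pᵀ * P = 1) (hP2 : P * Pᵀ = 1)
    (Λ : Fin n → ℝ) (hΛα : ∀ i ∈ α, 0 < Λ i)
    (Xbar : Matrix (Fin n) (Fin n) ℝ)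
    (hXdef : Xbar = P * Matrix.diagonal (fun i => if i ∈ α then Λ i else 0) * Pᵀ)
    (hXbar : Xbar.PosSemidef)
    (S : Matrix (Fin n) (Fin n) ℝ) (hS : S.PosSemidef) :
    (Metric.infDist (-S)
        (matNormalCone {Y : Matrix (Fin n) (Fin n) ℝ | Y.PosSemidef} Xbar)) ^ 2 =
      (∑ i ∈ α, ∑ j ∈ α, ((Pᵀ * S * P) i j) ^ 2) +
        2 * (∑ i ∈ α, ∑ j ∈ β, ((Pᵀ * S * P) i j) ^ 2) +
        2 * (∑ i ∈ α, ∑ j ∈ γ, ((Pᵀ * S * P) i j) ^ 2) := by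
  have hT : (Pᵀ * S * P).PosSemidef := by simpa using hS.conjTranspose_mul_mul_same P
  have hD : Pᵀ * Xbar * P = diagonal fun i => if i ∈ α then Λ i else 0 := by
    rw [hXdef, ← Matrix.mul_assoc, ← Matrix.mul_assoc, hP1, Matrix.one_mul, Matrix.mul_assoc,
      hP1, Matrix.mul_one]
  have hcompl : αᶜ = β ∪ γ := by
    rw [Finset.compl_eq_univ_sdiff, ← hcover, Finset.union_assoc, Finset.union_sdiff_left,
      Finset.sdiff_eq_self_of_disjoint (Finset.disjoint_union_right.2 ⟨hαβ, hαγ⟩).symm]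
  rw [← Metric.infDist_image (isometry_transpose_mul_mul hP2),
    image_transpose_mul_mul_matNormalCone hP1 hP2 hXbar, hD,
    show Pᵀ * -S * P = -(Pᵀ * S * P) by rw [Matrix.mul_neg, Matrix.neg_mul],
    sq_infDist_neg_matNormalCone_diagonal hT (α := α) (fun i hi => by simp [hi, hΛα i hi])
      (fun i hi => by simp [hi]),
    Finset.sum_sum_ite_mem_or_mem _ _ fun i j => by rw [← hT.isHermitian.apply i j]; rfl, hcompl]
  simp_rw [Finset.sum_union hβγ, Finset.sum_add_distrib]
  ring

theorem stmt7 {n : ℕ} (α β γ : Finset (Fin n))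
    (hαβ : Disjoint α β) (hαγ : Disjoint α γ) (hβγ : Disjoint β γ)
    (hcover : α ∪ β ∪ γ = Finset.univ)
    (P : Matrix (Fin n) (Fin n) ℝ) (hP1 : Pᵀ * P = 1) (hP2 : P * Pᵀ = 1)
    (Λ : Fin n → ℝ) (hΛα : ∀ i ∈ α, 0 < Λ i) (hΛγ : ∀ i ∈ γ, 0 < Λ i)
    (Xbar Sbar : Matrix (Fin n) (Fin n) ℝ)
    (hXdef : Xbar = P * Matrix.diagonal (fun i => if i ∈ α then Λ i else 0) * Pᵀ)
    (hSdef : Sbar = P * Matrix.diagonal (fun i => if i ∈ γ then Λ i else 0) * Pᵀ)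
    (hXbar : Xbar.PosSemidef) (hSbar : Sbar.PosSemidef)
    (hXS : Matrix.trace (Xbarᵀ * Sbar) = 0)
    (S : Matrix (Fin n) (Fin n) ℝ) (hS : S.PosSemidef) :
    (Metric.infDist (-S)
        (matNormalCone {Y : Matrix (Fin n) (Fin n) ℝ | Y.PosSemidef} Xbar)) ^ 2 =
      (∑ i ∈ α, ∑ j ∈ α, ((Pᵀ * S * P) i j) ^ 2) +
        2 * (∑ i ∈ α, ∑ j ∈ β, ((Pᵀ * S * P) i j) ^ 2) +
        2 * (∑ i ∈ α, ∑ j ∈ γ, ((Pᵀ * S * P) i j) ^ 2) :=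
  stmt7_general α β γ hαβ hαγ hβγ hcover P hP1 hP2 Λ hΛα Xbar hXdef hXbar S hS
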